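/- Let β ∈ ℂ with |β| > 1 and μ normalized Lebesgue measure on 𝕋. Every solution φ ∈ H₀ (the closed span of {z^{-s} : s ≥ 0} in L²(𝕋,μ)) of the equation φ − β P(zφ | H₀) = 1 is of the form φ = ∑_{s=0}^∞ β^{-s} z^{-s} (ψ − β^{-1} z^{-1}) for some constant ψ ∈ ℂ, and conversely every such φ is a solution. In particular, the solution set is a one-dimensional affine subspace of H₀. -/

import Mathlib

open MeasureTheory Filter Complex Topology
open scoped Real ENNReal

noncomputable section

instance : Fact (0 < 2 * Real.pi) := ⟨by positivity⟩

local notation "𝕋" => AddCircle (2 * Real.pi)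

/-- The normalized Haar (Lebesgue) measure on the circle. -/
abbrev μH : Measure 𝕋 := AddCircle.haarAddCircle

/-- The Hardy-type space `H₀`: the closed span in `L²(𝕋, μ)` of the functions
`z ↦ z^{-s}`, `s ≥ 0`. -/
def Hardy : Submodule ℂ (Lp ℂ 2 μH) :=
  (Submodule.span ℂ (Set.range fun s : ℕ => fourierLp 2 (-(s : ℤ)))).topologicalClosure

instance : CompleteSpace Hardy :=
  (Submodule.isClosed_topologicalClosure _).completeSpace_coe

/-- The candidate Cagan solution `∑_{s≥0} β^{-s} z^{-s} (ψ − β⁻¹ z⁻¹)`. -/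
def caganSol (β ψ : ℂ) : 𝕋 → ℂ :=
  fun x => ∑' s : ℕ, β⁻¹ ^ s * fourier (-(s : ℤ)) x * (ψ - β⁻¹ * fourier (-1) x)

/-! In Fourier coefficients `a k = ⟪z^k, φ⟫` the equation becomes a recursion. Membership in
`H₀` kills `a k` for `k > 0`, and `P(·|H₀)` keeps exactly the coefficients with `k ≤ 0`, so the
equation reads `a (-n) - β a (-n-1) = δ_{n0}` for `n ≥ 0`. Hence
`a (-n) = (a 0 - 1) β^{-n} + δ_{n0}`, that is `φ = (ψ - 1) G + 1` with `ψ = a 0` and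
`G = ∑ β^{-n} z^{-n} = (1 - β⁻¹z⁻¹)⁻¹`; pointwise this is the
stated series. Conversely this `φ` solves the equation because `z G = z + β⁻¹ G`. -/

open AddCircle
open scoped ComplexInnerProductSpace

section Circle

variable {T : ℝ}

theorem fourier_neg_natCast_apply (n : ℕ) (x : AddCircle T) :
    fourier (-(n : ℤ)) x = fourier (-1) x ^ n := by
  induction n with
  | zero => simp
  | succ n ih => rw [pow_succ, ← ih, ← fourier_add]; push_cast; ring_nf

theorem norm_mul_fourier_apply (c : ℂ) (n : ℤ) (x : AddCircle T) : ‖c * fourier n x‖ = ‖c‖ := by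
  rw [norm_mul, fourier_apply, Circle.norm_coe, mul_one]

theorem one_sub_mul_fourier_apply_ne_zero {r : ℂ} (hr : ‖r‖ < 1) (n : ℤ) (x : AddCircle T) :
    1 - r * fourier n x ≠ 0 := by
  rw [sub_ne_zero]
  intro h
  rw [← norm_mul_fourier_apply r n x, ← h, norm_one] at hr
  exact lt_irrefl _ hr

theorem hasSum_fourier_neg_geometric {r : ℂ} (hr : ‖r‖ < 1) (x : AddCircle T) :
    HasSum (fun n : ℕ => r ^ n * fourier (-(n : ℤ)) x) (1 - r * fourier (-1) x)⁻¹ := by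
  have hgeom : ‖r * fourier (-1) x‖ < 1 := by rwa [norm_mul_fourier_apply]
  simpa only [fourier_neg_natCast_apply, mul_pow] using hasSum_geometric_of_norm_lt_one hgeom

variable [Fact (0 < T)]

theorem inner_fourierLp_eq_fourierCoeff (f : Lp ℂ 2 (@haarAddCircle T _)) (k : ℤ) :
    ⟪fourierLp 2 k, f⟫ = fourierCoeff f k := by
  rw [← coe_fourierBasis, ← fourierBasis.repr_apply_apply, fourierBasis_repr]

theorem inner_fourierLp_fourierLp (m n : ℤ) :
    ⟪(fourierLp 2 m : Lp ℂ 2 (@haarAddCircle T _)), fourierLp 2 n⟫ = if m = n then 1 else 0 :=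
  orthonormal_iff_ite.mp orthonormal_fourier m n

theorem MeasureTheory.Lp.ext_inner_fourierLp {f g : Lp ℂ 2 (@haarAddCircle T _)}
    (h : ∀ k, ⟪fourierLp 2 k, f⟫ = ⟪fourierLp 2 k, g⟫) : f = g := by
  refine fourierBasis.repr.injective (lp.ext (funext fun k => ?_))
  simpa only [fourierBasis.repr_apply_apply, coe_fourierBasis] using h k

theorem inner_fourierLp_of_coeFn_eq_fourier_mul {φ g : Lp ℂ 2 (@haarAddCircle T _)} {m : ℤ}
    (hg : ⇑g =ᵐ[haarAddCircle] fun x => fourier m x * φ x) (k : ℤ) :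
    ⟪fourierLp 2 k, g⟫ = ⟪fourierLp 2 (k - m), φ⟫ := by
  rw [inner_fourierLp_eq_fourierCoeff, inner_fourierLp_eq_fourierCoeff, fourierCoeff,
    fourierCoeff]
  refine integral_congr_ae ?_
  filter_upwards [hg] with x hx
  rw [hx, smul_eq_mul, smul_eq_mul, ← mul_assoc, ← fourier_add, neg_sub, sub_eq_neg_add]

end Circle

section GeometricSeries

variable {T : ℝ} [Fact (0 < T)] {r : ℂ}

def geomFourier (r : ℂ) : C(AddCircle T, ℂ) := ∑' n : ℕ, r ^ n • fourier (-(n : ℤ))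

theorem hasSum_geomFourier (hr : ‖r‖ < 1) :
    HasSum (fun n : ℕ => r ^ n • (fourier (-(n : ℤ)) : C(AddCircle T, ℂ))) (geomFourier r) := by
  refine Summable.hasSum (Summable.of_norm ?_)
  simpa only [norm_smul, fourier_norm, mul_one, norm_pow]
    using summable_geometric_of_lt_one (norm_nonneg r) hr

theorem geomFourier_apply (hr : ‖r‖ < 1) (x : AddCircle T) :
    geomFourier r x = (1 - r * fourier (-1) x)⁻¹ :=
  ((hasSum_geomFourier hr).map (ContinuousMap.evalCLM ℂ x) (map_continuous _)).unique
    (hasSum_fourier_neg_geometric hr x)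

theorem fourier_one_mul_geomFourier_apply (hr : ‖r‖ < 1) (x : AddCircle T) :
    fourier 1 x * geomFourier r x = fourier 1 x + r * geomFourier r x := by
  have hzw : fourier 1 x * fourier (-1) x = 1 := by
    rw [← fourier_add, add_neg_cancel, fourier_zero]
  have hne := one_sub_mul_fourier_apply_ne_zero hr (-1) x
  rw [geomFourier_apply hr]
  field_simp
  linear_combination r * hzw

def geomFourierLp (r : ℂ) : Lp ℂ 2 (@haarAddCircle T _) :=
  ContinuousMap.toLp 2 haarAddCircle ℂ (geomFourier r)

theorem coeFn_geomFourierLp : ⇑(@geomFourierLp T _ r) =ᵐ[haarAddCircle] geomFourier r :=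
  ContinuousMap.coeFn_toLp _ _

theorem hasSum_geomFourierLp (hr : ‖r‖ < 1) :
    HasSum (fun n : ℕ => r ^ n • fourierLp 2 (-(n : ℤ))) (@geomFourierLp T _ r) := by
  simpa only [map_smul, fourierLp, geomFourierLp] using
    (hasSum_geomFourier hr).mapL (ContinuousMap.toLp (E := ℂ) 2 haarAddCircle ℂ)

theorem inner_fourierLp_neg_geomFourierLp (hr : ‖r‖ < 1) (n : ℕ) :
    ⟪fourierLp 2 (-(n : ℤ)), @geomFourierLp T _ r⟫ = r ^ n := by
  have hcoeff (m : ℕ) : ⟪fourierLp 2 (-(n : ℤ)), r ^ m • @fourierLp T _ 2 _ (-(m : ℤ))⟫ =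
      if m = n then r ^ n else 0 := by
    rw [inner_smul_right, inner_fourierLp_fourierLp]
    rcases eq_or_ne m n with rfl | h
    · simp
    · rw [if_neg (by omega), if_neg h, mul_zero]
  have hsum := (@hasSum_geomFourierLp T _ r hr).mapL (innerSL ℂ (fourierLp 2 (-(n : ℤ))))
  simp only [innerSL_apply_apply, hcoeff] at hsum
  exact hsum.unique (hasSum_ite_eq n (r ^ n))

end GeometricSeries

theorem fourierLp_mem_hardy {k : ℤ} (hk : k ≤ 0) : fourierLp 2 k ∈ Hardy := by
  obtain ⟨n, rfl⟩ : ∃ n : ℕ, k = -n := ⟨(-k).toNat, by omega⟩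
  exact Submodule.le_topologicalClosure _ (Submodule.subset_span ⟨n, rfl⟩)

theorem inner_fourierLp_eq_zero_of_mem_hardy {k : ℤ} (hk : 0 < k) {u : Lp ℂ 2 μH}
    (hu : u ∈ Hardy) : ⟪fourierLp 2 k, u⟫ = 0 := by
  have hle : Hardy ≤ (innerSL ℂ (fourierLp 2 k : Lp ℂ 2 μH)).ker := by
    refine Submodule.topologicalClosure_minimal _ (Submodule.span_le.mpr ?_)
      (ContinuousLinearMap.isClosed_ker _)
    rintro _ ⟨n, rfl⟩
    rw [SetLike.mem_coe, LinearMap.mem_ker, ContinuousLinearMap.coe_coe, innerSL_apply_apply,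
      inner_fourierLp_fourierLp, if_neg (by omega)]
  exact hle hu

theorem fourierLp_mem_hardy_orthogonal {k : ℤ} (hk : 0 < k) : fourierLp 2 k ∈ Hardyᗮ :=
  (Submodule.mem_orthogonal' _ _).mpr fun _ hu => inner_fourierLp_eq_zero_of_mem_hardy hk hu

theorem inner_fourierLp_orthogonalProjectionOnto_hardy {k : ℤ} (hk : k ≤ 0) (g : Lp ℂ 2 μH) :
    ⟪fourierLp 2 k, (Hardy.orthogonalProjectionOnto g : Lp ℂ 2 μH)⟫ = ⟪fourierLp 2 k, g⟫ :=
  Submodule.inner_orthogonalProjectionOnto_eq_of_mem_left ⟨_, fourierLp_mem_hardy hk⟩ g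

theorem geomFourierLp_mem_hardy {r : ℂ} (hr : ‖r‖ < 1) : geomFourierLp r ∈ Hardy :=
  (Submodule.isClosed_topologicalClosure _).mem_of_tendsto
    (hasSum_geomFourierLp hr).tendsto_sum_nat
    (Eventually.of_forall fun _ => Submodule.sum_mem _ fun n _ =>
      Submodule.smul_mem _ _ (fourierLp_mem_hardy (by omega)))

theorem eq_geometric_of_sub_mul_succ_eq_ite {K : Type*} [Field K] {β : K} (hβ : β ≠ 0)
    {b : ℕ → K} (h : ∀ n, b n - β * b (n + 1) = if n = 0 then 1 else 0) (n : ℕ) :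
    b n = (b 0 - 1) * β⁻¹ ^ n + if n = 0 then 1 else 0 := by
  induction n with
  | zero => simp
  | succ n ih =>
    have hstep : b (n + 1) = β⁻¹ * (b n - if n = 0 then 1 else 0) := by
      rw [← h n, sub_sub_cancel, inv_mul_cancel_left₀ hβ]
    rw [hstep, ih, if_neg n.succ_ne_zero]
    ring

theorem norm_inv_lt_one_of_one_lt_norm {𝕜 : Type*} [NormedDivisionRing 𝕜] {a : 𝕜}
    (ha : 1 < ‖a‖) : ‖a⁻¹‖ < 1 := by
  rw [norm_inv]
  exact inv_lt_one_of_one_lt₀ ha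

section Cagan

variable {β : ℂ}

def IsCaganSolution (β : ℂ) (φ : Lp ℂ 2 μH) : Prop :=
  φ ∈ Hardy ∧ ∃ g : Lp ℂ 2 μH, (⇑g =ᵐ[μH] fun x => fourier 1 x * φ x) ∧
    φ - β • ((Hardy.orthogonalProjectionOnto g : Hardy) : Lp ℂ 2 μH) = fourierLp 2 0

def caganSolLp (β ψ : ℂ) : Lp ℂ 2 μH := (ψ - 1) • geomFourierLp β⁻¹ + fourierLp 2 0

theorem caganSol_apply (hβ : 1 < ‖β‖) (ψ : ℂ) (x : 𝕋) :
    caganSol β ψ x = (ψ - 1) * geomFourier β⁻¹ x + 1 := by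
  have hr := norm_inv_lt_one_of_one_lt_norm hβ
  have hinv := inv_mul_cancel₀ (one_sub_mul_fourier_apply_ne_zero hr (-1) x)
  rw [caganSol, tsum_mul_right, (hasSum_fourier_neg_geometric hr x).tsum_eq,
    geomFourier_apply hr]
  linear_combination hinv

theorem coeFn_caganSolLp (hβ : 1 < ‖β‖) (ψ : ℂ) : ⇑(caganSolLp β ψ) =ᵐ[μH] caganSol β ψ := by
  filter_upwards [Lp.coeFn_add ((ψ - 1) • geomFourierLp β⁻¹) (fourierLp 2 0),
    Lp.coeFn_smul (ψ - 1) (geomFourierLp β⁻¹), coeFn_geomFourierLp (r := β⁻¹),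
    coeFn_fourierLp 2 0] with x hadd hsmul hgeom hone
  rw [caganSolLp, hadd, Pi.add_apply, hsmul, Pi.smul_apply, hgeom, hone, fourier_zero,
    smul_eq_mul, caganSol_apply hβ]

theorem caganSolLp_mem_hardy (hβ : 1 < ‖β‖) (ψ : ℂ) : caganSolLp β ψ ∈ Hardy :=
  Hardy.add_mem (Hardy.smul_mem _ (geomFourierLp_mem_hardy (norm_inv_lt_one_of_one_lt_norm hβ)))
    (fourierLp_mem_hardy le_rfl)

theorem inner_fourierLp_neg_caganSolLp (hβ : 1 < ‖β‖) (ψ : ℂ) (n : ℕ) :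
    ⟪fourierLp 2 (-(n : ℤ)), caganSolLp β ψ⟫ = (ψ - 1) * β⁻¹ ^ n + if n = 0 then 1 else 0 := by
  rw [caganSolLp, inner_add_right, inner_smul_right,
    inner_fourierLp_neg_geomFourierLp (norm_inv_lt_one_of_one_lt_norm hβ),
    inner_fourierLp_fourierLp]
  simp only [neg_eq_zero, Nat.cast_eq_zero]

theorem inner_fourierLp_zero_caganSolLp (hβ : 1 < ‖β‖) (ψ : ℂ) :
    ⟪fourierLp 2 0, caganSolLp β ψ⟫ = ψ := by
  simpa using inner_fourierLp_neg_caganSolLp hβ ψ 0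

theorem caganSolLp_injective (hβ : 1 < ‖β‖) : Function.Injective (caganSolLp β) := by
  intro ψ₁ ψ₂ h
  simpa only [inner_fourierLp_zero_caganSolLp hβ] using congrArg (⟪fourierLp 2 0, ·⟫) h

theorem isCaganSolution_caganSolLp (hβ : 1 < ‖β‖) (ψ : ℂ) :
    IsCaganSolution β (caganSolLp β ψ) := by
  have hr := norm_inv_lt_one_of_one_lt_norm hβ
  refine ⟨caganSolLp_mem_hardy hβ ψ, ψ • fourierLp 2 1 + ((ψ - 1) * β⁻¹) • geomFourierLp β⁻¹,
    ?_, ?_⟩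
  · filter_upwards [Lp.coeFn_add (ψ • fourierLp 2 1) (((ψ - 1) * β⁻¹) • geomFourierLp β⁻¹),
      Lp.coeFn_smul ψ (fourierLp 2 1), Lp.coeFn_smul ((ψ - 1) * β⁻¹) (geomFourierLp β⁻¹),
      coeFn_fourierLp 2 1, coeFn_geomFourierLp (r := β⁻¹), coeFn_caganSolLp hβ ψ]
      with x h1 h2 h3 h4 h5 h6
    rw [h1, Pi.add_apply, h2, h3, Pi.smul_apply, Pi.smul_apply, h4, h5, h6, caganSol_apply hβ,
      smul_eq_mul, smul_eq_mul]
    linear_combination (1 - ψ) * fourier_one_mul_geomFourier_apply hr x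
  · have hP1 : Hardy.orthogonalProjectionOnto (fourierLp 2 1) = 0 :=
      Submodule.orthogonalProjectionOnto_eq_zero_iff.mpr (fourierLp_mem_hardy_orthogonal one_pos)
    have hPG :
        (Hardy.orthogonalProjectionOnto (geomFourierLp β⁻¹) : Lp ℂ 2 μH) = geomFourierLp β⁻¹ :=
      Submodule.starProjection_eq_self_iff.mpr (geomFourierLp_mem_hardy hr)
    rw [map_add, map_smul, map_smul, hP1, smul_zero, zero_add, Submodule.coe_smul, hPG, smul_smul,
      caganSolLp, mul_left_comm, mul_inv_cancel₀ (norm_pos_iff.mp (one_pos.trans hβ)), mul_one,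
      add_sub_cancel_left]

theorem IsCaganSolution.eq_caganSolLp (hβ : 1 < ‖β‖) {φ : Lp ℂ 2 μH}
    (h : IsCaganSolution β φ) : φ = caganSolLp β ⟪fourierLp 2 0, φ⟫ := by
  obtain ⟨hφ, g, hg, hsol⟩ := h
  have hrec (n : ℕ) : ⟪fourierLp 2 (-(n : ℤ)), φ⟫ - β * ⟪fourierLp 2 (-((n + 1 : ℕ) : ℤ)), φ⟫ =
      if n = 0 then 1 else 0 := by
    have h := congrArg (⟪fourierLp 2 (-(n : ℤ)), ·⟫) hsol
    rw [inner_sub_right, inner_smul_right,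
      inner_fourierLp_orthogonalProjectionOnto_hardy (by omega),
      inner_fourierLp_of_coeFn_eq_fourier_mul hg, inner_fourierLp_fourierLp] at h
    simp only [neg_eq_zero, Nat.cast_eq_zero] at h
    rwa [show -(n : ℤ) - 1 = -((n + 1 : ℕ) : ℤ) by push_cast; ring] at h
  refine Lp.ext_inner_fourierLp fun k => ?_
  by_cases hk : 0 < k
  · rw [inner_fourierLp_eq_zero_of_mem_hardy hk hφ,
      inner_fourierLp_eq_zero_of_mem_hardy hk (caganSolLp_mem_hardy hβ _)]
  obtain ⟨n, rfl⟩ : ∃ n : ℕ, k = -n := ⟨(-k).toNat, by omega⟩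
  rw [inner_fourierLp_neg_caganSolLp hβ]
  exact eq_geometric_of_sub_mul_succ_eq_ite (norm_pos_iff.mp (one_pos.trans hβ)) hrec n

end Cagan

/-- For `|β| > 1`, the solutions `φ ∈ H₀` of the Cagan equation `φ − β P(zφ|H₀) = 1` are
exactly the functions `∑_{s≥0} β^{-s} z^{-s}(ψ − β⁻¹z⁻¹)`, `ψ ∈ ℂ`; distinct `ψ` give
distinct solutions, so the solution set is a one-dimensional affine space. -/
theorem cagan_solution_set (β : ℂ) (hβ : 1 < ‖β‖) :
    (∀ φ : Lp ℂ 2 μH,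
      (φ ∈ Hardy ∧ ∃ g : Lp ℂ 2 μH, (⇑g =ᵐ[μH] fun x => fourier 1 x * φ x) ∧
        φ - β • ((Hardy.orthogonalProjectionOnto g : Hardy) : Lp ℂ 2 μH) = fourierLp 2 0)
      ↔ ∃ ψ : ℂ, ⇑φ =ᵐ[μH] caganSol β ψ) ∧
    ∀ ψ₁ ψ₂ : ℂ, caganSol β ψ₁ =ᵐ[μH] caganSol β ψ₂ → ψ₁ = ψ₂ := by
  have hLp (ψ : ℂ) {φ : Lp ℂ 2 μH} (h : ⇑φ =ᵐ[μH] caganSol β ψ) : φ = caganSolLp β ψ :=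
    Lp.ext (h.trans (coeFn_caganSolLp hβ ψ).symm)
  refine ⟨fun φ => ⟨fun hφ => ?_, fun ⟨ψ, hψ⟩ => ?_⟩, fun ψ₁ ψ₂ h => ?_⟩
  · exact ⟨_, (IsCaganSolution.eq_caganSolLp hβ hφ).symm ▸ coeFn_caganSolLp hβ _⟩
  · exact hLp ψ hψ ▸ isCaganSolution_caganSolLp hβ ψ
  · exact caganSolLp_injective hβ (hLp ψ₂ ((coeFn_caganSolLp hβ ψ₁).trans h))
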